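/- Let G be a countable group, K ≤ G a subgroup, and p ∈ (0,1). Then for every g ∈ G, λ_{p,K}({H ∈ Sub(G) : g ∈ H}) = (1−p)^{‖g‖_K}, with the convention (1−p)^∞ = 0. -/

import Mathlib

/-!
`g` lies in `Core_A(K)` exactly when `A` avoids `S = {θ | g ∉ K^θ}`, a set of size `‖g‖_K`.
The events `θ ∉ A` are independent of probability `1 - p`, so this has probability
`(1 - p)^|S|` when `S` is finite; when `S` is infinite it is at most `(1 - p)^n` for every `n`,
hence zero. Countability of `G` makes `Core_A(K)` a measurable function of `A`.
-/

open Filter MeasureTheory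
open scoped ENNReal Topology

noncomputable section

namespace Paper

variable {G : Type*} [Group G]

/-- Conjugation on subgroups: `conjSubgroup g K = g K g⁻¹`. -/
def conjSubgroup (g : G) (K : Subgroup G) : Subgroup G :=
  K.map (MulAut.conj g).toMonoidHom

lemma mem_conjSubgroup {g x : G} {K : Subgroup G} :
    x ∈ conjSubgroup g K ↔ g⁻¹ * x * g ∈ K := by
  constructor
  · rintro ⟨y, hy, rfl⟩
    simpa [MulAut.conj_apply, mul_assoc] using hy
  · intro h
    exact ⟨g⁻¹ * x * g, h, by simp [MulAut.conj_apply]; group⟩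

lemma conjSubgroup_conjSubgroup (a b : G) (K : Subgroup G) :
    conjSubgroup a (conjSubgroup b K) = conjSubgroup (a * b) K := by
  ext x
  simp only [mem_conjSubgroup]
  have e : b⁻¹ * (a⁻¹ * x * a) * b = (a * b)⁻¹ * x * (a * b) := by group
  rw [e]

lemma conjSubgroup_eq_of_mem_normalizer {n : G} {K : Subgroup G}
    (hn : n ∈ Subgroup.normalizer (K : Set G)) : conjSubgroup n K = K := by
  ext x
  rw [mem_conjSubgroup]
  exact (Subgroup.mem_normalizer_iff''.mp hn x).symm

/-- `Θ = Θ_G(K)`: the set of right cosets of the normalizer of `K` in `G`. -/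
abbrev NormCoset (K : Subgroup G) := Quotient (QuotientGroup.rightRel (Subgroup.normalizer (K : Set G)))

/-- The conjugate `K^θ = g⁻¹ K g` for `θ = N_G(K)·g ∈ Θ` (it does not depend on the
chosen representative of the coset). -/
def conjCoset (K : Subgroup G) (θ : NormCoset K) : Subgroup G :=
  conjSubgroup θ.out⁻¹ K

lemma conjSubgroup_inv_eq_of_rel {a b : G} {K : Subgroup G}
    (h : QuotientGroup.rightRel (Subgroup.normalizer (K : Set G)) a b) :
    conjSubgroup a⁻¹ K = conjSubgroup b⁻¹ K := by
  rw [QuotientGroup.rightRel_apply] at h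
  have e : conjSubgroup a⁻¹ K = conjSubgroup (b⁻¹ * (b * a⁻¹)) K := by
    congr 1; group
  rw [e, ← conjSubgroup_conjSubgroup, conjSubgroup_eq_of_mem_normalizer h]

lemma conjCoset_mk (K : Subgroup G) (a : G) :
    conjCoset K (Quotient.mk (QuotientGroup.rightRel (Subgroup.normalizer (K : Set G))) a) =
      conjSubgroup a⁻¹ K := by
  apply conjSubgroup_inv_eq_of_rel
  exact Quotient.mk_out (s := QuotientGroup.rightRel (Subgroup.normalizer (K : Set G))) a

/-- The right action of `G` on `Θ`. -/
def shift (K : Subgroup G) (θ : NormCoset K) (g : G) : NormCoset K :=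
  Quotient.mk (QuotientGroup.rightRel (Subgroup.normalizer (K : Set G))) (θ.out * g)

lemma rel_mul {K : Subgroup G} {a b : G} (h : QuotientGroup.rightRel (Subgroup.normalizer (K : Set G)) a b)
    (g : G) : QuotientGroup.rightRel (Subgroup.normalizer (K : Set G)) (a * g) (b * g) := by
  rw [QuotientGroup.rightRel_apply] at h ⊢
  have e : b * g * (a * g)⁻¹ = b * a⁻¹ := by group
  rw [e]; exact h

lemma shift_mk (K : Subgroup G) (a g : G) :
    shift K (Quotient.mk (QuotientGroup.rightRel (Subgroup.normalizer (K : Set G))) a) g =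
      Quotient.mk (QuotientGroup.rightRel (Subgroup.normalizer (K : Set G))) (a * g) := by
  apply Quotient.sound
  exact rel_mul (Quotient.mk_out (s := QuotientGroup.rightRel (Subgroup.normalizer (K : Set G))) a) g

lemma shift_shift (K : Subgroup G) (θ : NormCoset K) (g h : G) :
    shift K (shift K θ g) h = shift K θ (g * h) := by
  induction θ using Quotient.inductionOn with
  | h a => rw [shift_mk, shift_mk, shift_mk, mul_assoc]

lemma shift_one (K : Subgroup G) (θ : NormCoset K) : shift K θ 1 = θ := by
  induction θ using Quotient.inductionOn with
  | h a => rw [shift_mk, mul_one]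

lemma shift_injective (K : Subgroup G) (g : G) :
    Function.Injective (fun θ : NormCoset K => shift K θ g) := by
  intro θ₁ θ₂ h
  have h2 := congrArg (fun θ : NormCoset K => shift K θ g⁻¹) h
  simpa [shift_shift, shift_one] using h2

lemma conjCoset_shift (K : Subgroup G) (θ : NormCoset K) (g : G) :
    conjCoset K (shift K θ g) = conjSubgroup g⁻¹ (conjCoset K θ) := by
  induction θ using Quotient.inductionOn with
  | h a =>
    rw [shift_mk, conjCoset_mk, conjCoset_mk, conjSubgroup_conjSubgroup]
    congr 1
    group

/-- `‖g‖_K = #{θ ∈ Θ : g ∉ K^θ} ∈ ℕ ∪ {∞}`. -/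
def normOf (K : Subgroup G) (g : G) : ℕ∞ :=
  {θ : NormCoset K | g ∉ conjCoset K θ}.encard

/-- `Core_∅(K) = {g : ‖g‖_K < ∞}`, as a subgroup of `G`. -/
def emptyCore (K : Subgroup G) : Subgroup G where
  carrier := {g | normOf K g < ⊤}
  one_mem' := by
    have h : {θ : NormCoset K | (1 : G) ∉ conjCoset K θ} = ∅ := by
      ext θ; simp [Subgroup.one_mem]
    simp [normOf, Set.mem_setOf_eq, h]
  mul_mem' := by
    intro a b ha hb
    simp only [Set.mem_setOf_eq, normOf] at ha hb ⊢
    have hsub : {θ : NormCoset K | a * b ∉ conjCoset K θ} ⊆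
        {θ : NormCoset K | a ∉ conjCoset K θ} ∪ {θ : NormCoset K | b ∉ conjCoset K θ} := by
      intro θ hθ
      by_contra hc
      simp only [Set.mem_union, Set.mem_setOf_eq, not_or, not_not] at hc
      exact hθ (mul_mem hc.1 hc.2)
    calc {θ : NormCoset K | a * b ∉ conjCoset K θ}.encard
        ≤ ({θ : NormCoset K | a ∉ conjCoset K θ} ∪
            {θ : NormCoset K | b ∉ conjCoset K θ}).encard := Set.encard_mono hsub
      _ ≤ _ + _ := Set.encard_union_le _ _
      _ < ⊤ := WithTop.add_lt_top.mpr ⟨ha, hb⟩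
  inv_mem' := by
    intro a ha
    have h : {θ : NormCoset K | a⁻¹ ∉ conjCoset K θ} =
        {θ : NormCoset K | a ∉ conjCoset K θ} := by
      ext θ; simp
    simpa only [Set.mem_setOf_eq, normOf, h] using ha

lemma mem_emptyCore {K : Subgroup G} {g : G} :
    g ∈ emptyCore K ↔ normOf K g < ⊤ := Iff.rfl

/-- `Core_∅(K)` is a normal subgroup of `G`. -/
instance emptyCore_normal (K : Subgroup G) : (emptyCore K).Normal := by
  constructor
  intro n hn g
  rw [mem_emptyCore] at hn ⊢
  rw [normOf, Set.encard_lt_top_iff] at hn ⊢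
  have hset : {θ : NormCoset K | g * n * g⁻¹ ∉ conjCoset K θ} =
      (fun θ : NormCoset K => shift K θ g) ⁻¹' {θ : NormCoset K | n ∉ conjCoset K θ} := by
    ext θ
    simp only [Set.mem_setOf_eq, Set.mem_preimage, conjCoset_shift, mem_conjSubgroup]
    have e : g⁻¹⁻¹ * n * g⁻¹ = g * n * g⁻¹ := by group
    rw [e]
  rw [hset]
  exact Set.Finite.preimage (Set.injOn_of_injective (shift_injective K g)) hn

variable {G₀ : Type*} [Group G₀]

/-- The Borel σ-algebra of the Chabauty topology on the space of subgroups of a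
countable group: it is generated by the sets `{K : g ∈ K}`, `g ∈ G`. -/
instance subgroupMeasurableSpace : MeasurableSpace (Subgroup G₀) :=
  MeasurableSpace.generateFrom {s | ∃ g : G₀, s = {K : Subgroup G₀ | g ∈ K}}

/-- A probability space carrying a product-Bernoulli(`p`) random subset of
`Θ = Θ_G(K)`, encoded by independent `{0,1}`-valued random variables `X θ` with
`P[X θ = 1] = p`. -/
structure BernoulliSetup {G : Type*} [Group G] (K : Subgroup G) (p : ℝ) where
  Ω : Type
  mΩ : MeasurableSpace Ω
  P : @Measure Ω mΩ
  prob : @IsProbabilityMeasure Ω mΩ P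
  X : NormCoset K → Ω → Bool
  meas : ∀ θ, @Measurable Ω Bool mΩ _ (X θ)
  bernoulli : ∀ θ, P {ω | X θ ω = true} = ENNReal.ofReal p
  indep : @ProbabilityTheory.iIndepFun Ω (NormCoset K) mΩ (fun _ => Bool)
    (fun _ => inferInstance) X P

/-- The law of the intersectional random subgroup
`Core_A(K) = ⋂_{θ ∈ A} K^θ`, where `A = {θ : X θ = 1}` is the Bernoulli-`p` random
subset of `Θ` encoded by the setup `s`. -/
def BernoulliSetup.law {G : Type*} [Group G] {K : Subgroup G} {p : ℝ}
    (s : BernoulliSetup K p) : Measure (Subgroup G) :=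
  @Measure.map s.Ω (Subgroup G) s.mΩ _ (fun ω => ⨅ θ ∈ {θ | s.X θ ω = true}, conjCoset K θ) s.P

/-- `ν` is the intersectional IRS `λ_{p,K}`: the law of `Core_A(K)` for a
product-Bernoulli(`p`) random subset `A ⊆ Θ`. -/
def IsIntersectionalIRS {G : Type*} [Group G] (K : Subgroup G) (p : ℝ)
    (ν : Measure (Subgroup G)) : Prop :=
  IsProbabilityMeasure ν ∧ ∃ s : BernoulliSetup K p, ν = s.law

/-- `(1 - p) ^ m` for `m ∈ ℕ ∪ {∞}`, with the convention `x ^ ∞ = 0`. -/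
def enatPow (x : ℝ) (m : ℕ∞) : ℝ := if m = ⊤ then 0 else x ^ m.toNat
open ProbabilityTheory

lemma enatPow_coe (x : ℝ) (n : ℕ) : enatPow x n = x ^ n := by
  simp [enatPow]

lemma enatPow_top (x : ℝ) : enatPow x ⊤ = 0 := if_pos rfl

section IndependentEvents

variable {Ω ι : Type*} [MeasurableSpace Ω] {μ : Measure Ω} {E : ι → Set Ω}

theorem _root_.ProbabilityTheory.iIndepFun.iIndepSet_preimage {β : Type*} [MeasurableSpace β]
    {X : ι → Ω → β} (hX : iIndepFun X μ) (hXm : ∀ i, Measurable (X i)) {B : Set β}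
    (hB : MeasurableSet B) : iIndepSet (fun i => X i ⁻¹' B) μ :=
  (iIndepSet_iff_meas_biInter fun i => hXm i hB).2 fun _ =>
    hX.meas_biInter fun _ _ => ⟨B, hB, rfl⟩

theorem _root_.ProbabilityTheory.iIndepSet.measure_biInter_finset_eq_pow {q : ℝ≥0∞}
    (h : iIndepSet E μ) (hE : ∀ i, μ (E i) = q) (T : Finset ι) :
    μ (⋂ i ∈ T, E i) = q ^ T.card := by
  rw [h.meas_biInter T, Finset.prod_congr rfl fun i _ => hE i, Finset.prod_const]

theorem _root_.ProbabilityTheory.iIndepSet.measure_biInter_eq_zero_of_infinite {q : ℝ≥0∞}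
    (h : iIndepSet E μ) (hE : ∀ i, μ (E i) = q) (hq : q < 1) {S : Set ι} (hS : S.Infinite) :
    μ (⋂ i ∈ S, E i) = 0 := by
  refine nonpos_iff_eq_zero.1 <|
    ge_of_tendsto' (ENNReal.tendsto_pow_atTop_nhds_zero_of_lt_one hq) fun n => ?_
  obtain ⟨T, hTS, rfl⟩ := hS.exists_subset_card_eq n
  calc μ (⋂ i ∈ S, E i) ≤ μ (⋂ i ∈ T, E i) := measure_mono (Set.biInter_subset_biInter_left hTS)
    _ = q ^ T.card := h.measure_biInter_finset_eq_pow hE T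

theorem _root_.ProbabilityTheory.iIndepSet.measure_biInter_eq_ofReal_enatPow {q : ℝ}
    (h : iIndepSet E μ) (hE : ∀ i, μ (E i) = ENNReal.ofReal q) (hq₀ : 0 ≤ q) (hq₁ : q < 1)
    (S : Set ι) : μ (⋂ i ∈ S, E i) = ENNReal.ofReal (enatPow q S.encard) := by
  rcases S.finite_or_infinite with hS | hS
  · lift S to Finset ι using hS
    rw [Set.encard_coe_eq_coe_finsetCard, enatPow_coe, ENNReal.ofReal_pow hq₀,
      ← h.measure_biInter_finset_eq_pow hE]
    simp only [Finset.mem_coe]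
  · rw [hS.encard_eq, enatPow_top, ENNReal.ofReal_zero]
    exact h.measure_biInter_eq_zero_of_infinite hE (ENNReal.ofReal_lt_one.2 hq₁) hS

end IndependentEvents

lemma mem_biInf_iff {ι : Type*} (H : ι → Subgroup G) (A : Set ι) (g : G) :
    g ∈ ⨅ i ∈ A, H i ↔ ∀ i, g ∉ H i → i ∉ A := by
  simp only [Subgroup.mem_iInf]
  exact forall_congr' fun i => not_imp_not.symm

lemma measurableSet_setOf_mem (g : G) : MeasurableSet {H : Subgroup G | g ∈ H} :=
  MeasurableSpace.measurableSet_generateFrom ⟨g, rfl⟩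

namespace BernoulliSetup

variable {K : Subgroup G} {p : ℝ} (s : BernoulliSetup K p)

instance : MeasurableSpace s.Ω := s.mΩ

instance : IsProbabilityMeasure s.P := s.prob

def core (ω : s.Ω) : Subgroup G := ⨅ θ ∈ {θ | s.X θ ω = true}, conjCoset K θ

lemma law_eq_map : s.law = s.P.map s.core := rfl

lemma core_preimage_setOf_mem (g : G) :
    s.core ⁻¹' {H | g ∈ H} = ⋂ θ ∈ {θ | g ∉ conjCoset K θ}, s.X θ ⁻¹' {false} := by
  ext ω
  rw [Set.mem_preimage, Set.mem_ofPred_eq, core, mem_biInf_iff]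
  simp only [Set.mem_iInter, Set.mem_preimage, Set.mem_singleton_iff, Set.mem_ofPred_eq,
    Bool.not_eq_true]

lemma measurable_core [Countable G] : Measurable s.core :=
  measurable_generateFrom <| by
    rintro _ ⟨g, rfl⟩
    rw [core_preimage_setOf_mem]
    exact .biInter (Set.to_countable _) fun θ _ => s.meas θ (measurableSet_singleton false)

lemma law_setOf_mem [Countable G] (g : G) :
    s.law {H | g ∈ H} = s.P (⋂ θ ∈ {θ | g ∉ conjCoset K θ}, s.X θ ⁻¹' {false}) := by
  rw [law_eq_map, Measure.map_apply s.measurable_core (measurableSet_setOf_mem g),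
    core_preimage_setOf_mem]

lemma iIndepSet_preimage_false : iIndepSet (fun θ => s.X θ ⁻¹' {false}) s.P :=
  s.indep.iIndepSet_preimage s.meas (measurableSet_singleton false)

lemma measure_preimage_false (hp : 0 ≤ p) (θ : NormCoset K) :
    s.P (s.X θ ⁻¹' {false}) = ENNReal.ofReal (1 - p) := by
  have hcompl : s.X θ ⁻¹' {false} = (s.X θ ⁻¹' {true})ᶜ := by
    ext ω
    simp
  have htrue : s.P (s.X θ ⁻¹' {true}) = ENNReal.ofReal p := s.bernoulli θ
  rw [hcompl, prob_compl_eq_one_sub (s.meas θ (measurableSet_singleton true)), htrue,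
    ENNReal.ofReal_sub 1 hp, ENNReal.ofReal_one]

end BernoulliSetup

/-- **Proposition 2.2 (displayed identity).** For the intersectional IRS `λ_{p,K}`,
`λ_{p,K}({H : g ∈ H}) = (1-p)^{‖g‖_K}`, with `(1-p)^∞ = 0`. -/
theorem intersectional_IRS_cylinder {G : Type*} [Group G] [Countable G]
    (K : Subgroup G) (p : ℝ) (hp : p ∈ Set.Ioo (0 : ℝ) 1)
    (ν : Measure (Subgroup G)) (hν : IsIntersectionalIRS K p ν) (g : G) :
    ν {H : Subgroup G | g ∈ H} = ENNReal.ofReal (enatPow (1 - p) (normOf K g)) := by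
  obtain ⟨-, s, rfl⟩ := hν
  rw [s.law_setOf_mem, normOf]
  exact s.iIndepSet_preimage_false.measure_biInter_eq_ofReal_enatPow
    (s.measure_preimage_false hp.1.le) (sub_nonneg.2 hp.2.le) (sub_lt_self 1 hp.1) _

end Paper
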